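/- arXiv:1806.04834 — 2 statements merged into one kernel-verified Lean document; each statement's English description precedes it below -/
import Mathlib

section
/- Let C be the additive code with check matrix (A | A' | A'') in G = (ℤ/4)^{2m} × (ℤ/2)^{2n'} × (ℤ/4)^{n''}. If the set of syndromes {syndrome of z : z ∈ G} contains exactly 6m + 3n' + 3n'' nonzero elements, and every nonzero element of this set is the syndrome of at least one weight-1 element of G, then C is a 1-perfect code in the Doob graph D(m, n'+n''). -/
open Matrix Polynomial Finset

/-- Vertex set of the Doob graph `D(m, n'+n'')`. -/
abbrev DoobV (m n' n'' : ℕ) : Type :=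
  (Fin (2*m) → ZMod 4) × (Fin (2*n') → ZMod 2) × (Fin n'' → ZMod 4)

/-- Connecting set of the Shrikhande graph as a Cayley graph on `(ℤ/4)²`. -/
def shrGen : Set (ZMod 4 × ZMod 4) :=
  {(0,1), (3,0), (3,3), (0,3), (1,0), (1,1)}

/-- Connecting set of `K₄` as a Cayley graph on `(ℤ/2)²`. -/
def k4Gen : Set (ZMod 2 × ZMod 2) :=
  {(0,1), (1,0), (1,1)}

/-- `e` is a weight-1 element of `DoobV m n' n''`. -/
def IsWeightOne {m n' n'' : ℕ} (e : DoobV m n' n'') : Prop :=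
  (∃ i : Fin m,
    (e.1 ⟨2*i.1, by have := i.2; omega⟩, e.1 ⟨2*i.1+1, by have := i.2; omega⟩) ∈ shrGen ∧
    (∀ j : Fin (2*m), j.1 ≠ 2*i.1 → j.1 ≠ 2*i.1+1 → e.1 j = 0) ∧
    e.2.1 = 0 ∧ e.2.2 = 0) ∨
  (∃ i : Fin n',
    (e.2.1 ⟨2*i.1, by have := i.2; omega⟩, e.2.1 ⟨2*i.1+1, by have := i.2; omega⟩) ∈ k4Gen ∧
    (∀ j : Fin (2*n'), j.1 ≠ 2*i.1 → j.1 ≠ 2*i.1+1 → e.2.1 j = 0) ∧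
    e.1 = 0 ∧ e.2.2 = 0) ∨
  (∃ i : Fin n'',
    e.2.2 i ≠ 0 ∧ (∀ j : Fin n'', j ≠ i → e.2.2 j = 0) ∧
    e.1 = 0 ∧ e.2.1 = 0)

/-- `C` is a 1-perfect code in the Doob graph `D(m, n'+n'')`: every vertex is at graph
distance at most 1 from exactly one element of `C`. -/
def IsPerfectCode {m n' n'' : ℕ} (C : Set (DoobV m n' n'')) : Prop :=
  ∀ v : DoobV m n' n'', ∃! c : DoobV m n' n'', c ∈ C ∧ (v = c ∨ IsWeightOne (v - c))

/-- The coordinatewise homomorphism `ℤ/2 → ℤ/4` sending `1` to `2`. -/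
def z2toZ4 (b : ZMod 2) : ZMod 4 := 2 * (b.val : ZMod 4)

/-- Syndrome of `z` with respect to the check matrix `(A | A' | A'')`:
`A z₁ᵀ + 2·(A' z₂ᵀ) + A'' z₃ᵀ`. -/
def syndrome {k m n' n'' : ℕ}
    (A : Matrix (Fin k) (Fin (2*m)) (ZMod 4))
    (A' : Matrix (Fin k) (Fin (2*n')) (ZMod 2))
    (A'' : Matrix (Fin k) (Fin n'') (ZMod 4))
    (z : DoobV m n' n'') : Fin k → ZMod 4 :=
  A.mulVec z.1 + (fun i => z2toZ4 (A'.mulVec z.2.1 i)) + A''.mulVec z.2.2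

/-- The additive code with check matrix `(A | A' | A'')`. -/
def codeOf {k m n' n'' : ℕ}
    (A : Matrix (Fin k) (Fin (2*m)) (ZMod 4))
    (A' : Matrix (Fin k) (Fin (2*n')) (ZMod 2))
    (A'' : Matrix (Fin k) (Fin n'') (ZMod 4)) : Set (DoobV m n' n'') :=
  {z | syndrome A A' A'' z = 0}

-- z2toZ4 additive
lemma z2toZ4_sub : ∀ a b : ZMod 2, z2toZ4 (a - b) = z2toZ4 a - z2toZ4 b := by decide

lemma syndrome_sub {k m n' n'' : ℕ}
    (A : Matrix (Fin k) (Fin (2*m)) (ZMod 4))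
    (A' : Matrix (Fin k) (Fin (2*n')) (ZMod 2))
    (A'' : Matrix (Fin k) (Fin n'') (ZMod 4))
    (x y : DoobV m n' n'') :
    syndrome A A' A'' (x - y) = syndrome A A' A'' x - syndrome A A' A'' y := by
  funext i
  simp only [syndrome, Prod.fst_sub, Prod.snd_sub, Matrix.mulVec_sub, Pi.add_apply,
    Pi.sub_apply, z2toZ4_sub]
  ring

def s6 : Finset (ZMod 4 × ZMod 4) := {(0,1), (3,0), (3,3), (0,3), (1,0), (1,1)}
def s3 : Finset (ZMod 2 × ZMod 2) := {(0,1), (1,0), (1,1)}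
def s3' : Finset (ZMod 4) := {1, 2, 3}

def emb1 {m n' n'' : ℕ} (x : Fin m × (ZMod 4 × ZMod 4)) : DoobV m n' n'' :=
  (fun j => if j.1 = 2*x.1.1 then x.2.1 else if j.1 = 2*x.1.1+1 then x.2.2 else 0, 0, 0)

def emb2 {m n' n'' : ℕ} (x : Fin n' × (ZMod 2 × ZMod 2)) : DoobV m n' n'' :=
  (0, fun j => if j.1 = 2*x.1.1 then x.2.1 else if j.1 = 2*x.1.1+1 then x.2.2 else 0, 0)

def emb3 {m n' n'' : ℕ} (x : Fin n'' × ZMod 4) : DoobV m n' n'' :=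
  (0, 0, fun j => if j = x.1 then x.2 else 0)

noncomputable def bigF (m n' n'' : ℕ) : Finset (DoobV m n' n'') := by
  classical
  exact (Finset.univ ×ˢ s6).image (emb1 (m := m) (n' := n') (n'' := n'')) ∪
    (Finset.univ ×ˢ s3).image emb2 ∪ (Finset.univ ×ˢ s3').image emb3

lemma weightOne_mem_bigF {m n' n'' : ℕ} (e : DoobV m n' n'') (he : IsWeightOne e) :
    e ∈ bigF m n' n'' := by
  classical
  rcases he with ⟨i, hp, hz, h1, h2⟩ | ⟨i, hp, hz, h1, h2⟩ | ⟨i, hp, hz, h1, h2⟩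
  · apply Finset.mem_union_left; apply Finset.mem_union_left
    apply Finset.mem_image.2
    have hp6 : (e.1 ⟨2*i.1, by have := i.2; omega⟩, e.1 ⟨2*i.1+1, by have := i.2; omega⟩) ∈ s6 := by
      simp only [shrGen, Set.mem_insert_iff, Set.mem_singleton_iff] at hp
      rcases hp with h|h|h|h|h|h <;> rw [h] <;> decide
    refine ⟨(i, (e.1 ⟨2*i.1, by have := i.2; omega⟩, e.1 ⟨2*i.1+1, by have := i.2; omega⟩)),
      Finset.mem_product.2 ⟨Finset.mem_univ _, hp6⟩, ?_⟩
    refine Prod.ext ?_ (Prod.ext (by simpa [emb1] using h1.symm) (by simpa [emb1] using h2.symm))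
    funext j
    simp only [emb1]
    by_cases hj : j.1 = 2*i.1
    · rw [if_pos hj]; exact congrArg e.1 (Fin.ext hj.symm)
    · by_cases hj' : j.1 = 2*i.1+1
      · rw [if_neg hj, if_pos hj']; exact congrArg e.1 (Fin.ext hj'.symm)
      · rw [if_neg hj, if_neg hj']; exact (hz j hj hj').symm
  · apply Finset.mem_union_left; apply Finset.mem_union_right
    apply Finset.mem_image.2
    have hp3 : (e.2.1 ⟨2*i.1, by have := i.2; omega⟩, e.2.1 ⟨2*i.1+1, by have := i.2; omega⟩) ∈ s3 := by
      simp only [k4Gen, Set.mem_insert_iff, Set.mem_singleton_iff] at hp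
      rcases hp with h|h|h <;> rw [h] <;> decide
    refine ⟨(i, (e.2.1 ⟨2*i.1, by have := i.2; omega⟩, e.2.1 ⟨2*i.1+1, by have := i.2; omega⟩)),
      Finset.mem_product.2 ⟨Finset.mem_univ _, hp3⟩, ?_⟩
    refine Prod.ext (by simpa [emb2] using h1.symm) (Prod.ext ?_ (by simpa [emb2] using h2.symm))
    funext j
    simp only [emb2]
    by_cases hj : j.1 = 2*i.1
    · rw [if_pos hj]; exact congrArg e.2.1 (Fin.ext hj.symm)
    · by_cases hj' : j.1 = 2*i.1+1
      · rw [if_neg hj, if_pos hj']; exact congrArg e.2.1 (Fin.ext hj'.symm)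
      · rw [if_neg hj, if_neg hj']; exact (hz j hj hj').symm
  · apply Finset.mem_union_right
    apply Finset.mem_image.2
    have hp3 : e.2.2 i ∈ s3' := by
      have : ∀ a : ZMod 4, a ≠ 0 → a ∈ s3' := by decide
      exact this _ hp
    refine ⟨(i, e.2.2 i), Finset.mem_product.2 ⟨Finset.mem_univ _, hp3⟩, ?_⟩
    refine Prod.ext (by simpa [emb3] using h1.symm)
      (Prod.ext (by simpa [emb3] using h2.symm) ?_)
    funext j
    simp only [emb3]
    by_cases hj : j = i
    · rw [if_pos hj, hj]
    · rw [if_neg hj]; exact (hz j hj).symm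

lemma bigF_card_le (m n' n'' : ℕ) : (bigF m n' n'').card ≤ 6*m + 3*n' + 3*n'' := by
  classical
  have h1 : ((Finset.univ ×ˢ s6).image (emb1 (m := m) (n' := n') (n'' := n''))).card ≤ 6*m := by
    calc _ ≤ (Finset.univ ×ˢ s6).card := Finset.card_image_le
    _ = m * s6.card := by rw [Finset.card_product, Finset.card_univ, Fintype.card_fin]
    _ ≤ 6*m := by rw [show s6.card = 6 from by decide]; omega
  have h2 : ((Finset.univ ×ˢ s3).image (emb2 (m := m) (n' := n') (n'' := n''))).card ≤ 3*n' := by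
    calc _ ≤ (Finset.univ ×ˢ s3).card := Finset.card_image_le
    _ = n' * s3.card := by rw [Finset.card_product, Finset.card_univ, Fintype.card_fin]
    _ ≤ 3*n' := by rw [show s3.card = 3 from by decide]; omega
  have h3 : ((Finset.univ ×ˢ s3').image (emb3 (m := m) (n' := n') (n'' := n''))).card ≤ 3*n'' := by
    calc _ ≤ (Finset.univ ×ˢ s3').card := Finset.card_image_le
    _ = n'' * s3'.card := by rw [Finset.card_product, Finset.card_univ, Fintype.card_fin]
    _ ≤ 3*n'' := by rw [show s3'.card = 3 from by decide]; omega
  calc (bigF m n' n'').card ≤ _ := Finset.card_union_le _ _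
  _ ≤ _ := Nat.add_le_add (Finset.card_union_le _ _) le_rfl
  _ ≤ 6*m + 3*n' + 3*n'' := by omega

/-- if the set of syndromes contains exactly `6m + 3n' + 3n''` nonzero elements
and every nonzero element of it is the syndrome of at least one weight-1 element, then the
additive code with check matrix `(A | A' | A'')` is 1-perfect. -/
theorem statement1 {k m n' n'' : ℕ}
    (A : Matrix (Fin k) (Fin (2*m)) (ZMod 4))
    (A' : Matrix (Fin k) (Fin (2*n')) (ZMod 2))
    (A'' : Matrix (Fin k) (Fin n'') (ZMod 4))
    (hcard : {s : Fin k → ZMod 4 |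
        s ≠ 0 ∧ ∃ z : DoobV m n' n'', syndrome A A' A'' z = s}.ncard = 6*m + 3*n' + 3*n'')
    (hcover : ∀ z : DoobV m n' n'', syndrome A A' A'' z ≠ 0 →
        ∃ e : DoobV m n' n'', IsWeightOne e ∧ syndrome A A' A'' e = syndrome A A' A'' z) :
    IsPerfectCode (codeOf A A' A'') := by
  classical
  have hsub := syndrome_sub A A' A''
  set σ := syndrome A A' A'' with hσ
  set W : Set (DoobV m n' n'') := {e | IsWeightOne e} with hWdef
  set S : Set (Fin k → ZMod 4) := {s | s ≠ 0 ∧ ∃ z, σ z = s} with hSdef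
  have hWfin : W.Finite := Set.toFinite _
  have hWle : W.ncard ≤ 6*m+3*n'+3*n'' := by
    have hsub' : W ⊆ ↑(bigF m n' n'') := fun e he => weightOne_mem_bigF e he
    calc W.ncard ≤ ((bigF m n' n'' : Finset _) : Set _).ncard :=
          Set.ncard_le_ncard hsub' (Set.toFinite _)
    _ = (bigF m n' n'').card := Set.ncard_coe_finset _
    _ ≤ _ := bigF_card_le m n' n''
  have hSsub : S ⊆ σ '' W := by
    rintro s ⟨hs0, z, hz⟩
    obtain ⟨e, he, hse⟩ := hcover z (by rw [hz]; exact hs0)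
    exact ⟨e, he, by rw [hse, hz]⟩
  have himle : (σ '' W).ncard ≤ W.ncard := Set.ncard_image_le hWfin
  have hSn : S.ncard = 6*m+3*n'+3*n'' := hcard
  have hWge : 6*m+3*n'+3*n'' ≤ (σ '' W).ncard := by
    rw [← hSn]; exact Set.ncard_le_ncard hSsub (hWfin.image _)
  have heqcard : (σ '' W).ncard = W.ncard := le_antisymm himle (by omega)
  have hinj : Set.InjOn σ W := Set.injOn_of_ncard_image_eq heqcard hWfin
  have hSeq : S = σ '' W := Set.eq_of_subset_of_ncard_le hSsub (by omega) (hWfin.image _)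
  have hnz : ∀ e, IsWeightOne e → σ e ≠ 0 := by
    intro e he
    have hmem : σ e ∈ S := by rw [hSeq]; exact ⟨e, he, rfl⟩
    exact hmem.1
  intro v
  by_cases hv : σ v = 0
  · refine ⟨v, ⟨hv, Or.inl rfl⟩, ?_⟩
    rintro c ⟨hc, hor⟩
    have hc' : σ c = 0 := hc
    rcases hor with rfl | hwc
    · rfl
    · exact absurd (by rw [hsub, hv, hc', sub_zero] : σ (v - c) = 0) (hnz _ hwc)
  · obtain ⟨e, he, hse⟩ := hcover v hv
    refine ⟨v - e, ⟨?_, Or.inr ?_⟩, ?_⟩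
    · show σ (v - e) = 0
      rw [hsub, hse, sub_self]
    · have hvv : v - (v - e) = e := by abel
      rw [hvv]; exact he
    · rintro c ⟨hc, hor⟩
      have hc' : σ c = 0 := hc
      rcases hor with rfl | hwc
      · exact absurd hc' hv
      · have h1 : σ (v - c) = σ e := by rw [hsub, hc', sub_zero, hse]
        have h2 : v - c = e := hinj hwc he h1
        rw [← h2]; abel
end

section
/- For every odd integer Δ ≥ 3, there exists an additive 1-perfect code in (ℤ/4)^{2m} × (ℤ/2)^{2n'} × (ℤ/4)^{4} with respect to the Doob graph D(m, n'+4), where m = (2^{2Δ} − 2^Δ − 8)/6 and n' = (2^Δ − 5)/3. -/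
open Matrix Polynomial Finset

/-! ### Auxiliary development -/

set_option maxRecDepth 4000000

section Core

/-- The six syndrome values coming from a Shrikhande column pair. -/
def shval {M : Type*} [AddCommGroup M] (u w : M) : Fin 6 → M
  | 0 => u
  | 1 => -u
  | 2 => w
  | 3 => -w
  | 4 => u + w
  | 5 => -(u + w)
/-- The three syndrome values coming from a `K₄` column pair. -/
def k4val {W : Type*} [AddCommGroup W] (u w : W) : Fin 3 → W
  | 0 => u
  | 1 => w
  | 2 => u + w
/-- The three syndrome values coming from a `ℤ/4` column. -/
def cval {M : Type*} [AddCommGroup M] (c : M) : Fin 3 → M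
  | 0 => c
  | 1 => c + c
  | 2 => -c

/-- Abstract index of a ball element. -/
abbrev Spec (ι κ : Type*) : Type _ := (ι × Fin 6) ⊕ ((κ × Fin 3) ⊕ (Fin 4 × Fin 3))

/-- Syndrome values of the ball elements. -/
def fval {M W ι κ : Type*} [AddCommGroup M] [AddCommGroup W]
    (j : W →+ M) (u w : ι → M) (u' w' : κ → W) (c : Fin 4 → M) :
    Option (Spec ι κ) → M
  | none => 0
  | some (.inl (i, a)) => shval (u i) (w i) a
  | some (.inr (.inl (p, b))) => j (k4val (u' p) (w' p) b)
  | some (.inr (.inr (l, b))) => cval (c l) b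

lemma shval_zero {M : Type*} [AddCommGroup M] (a : Fin 6) : shval (0 : M) 0 a = 0 := by
  fin_cases a <;> simp [shval]

lemma k4val_zero {W : Type*} [AddCommGroup W] (b : Fin 3) : k4val (0 : W) 0 b = 0 := by
  fin_cases b <;> simp [k4val]

lemma cval_zero {M : Type*} [AddCommGroup M] (b : Fin 3) : cval (0 : M) b = 0 := by
  fin_cases b <;> simp [cval]

lemma shval_pair {M K : Type*} [AddCommGroup M] [AddCommGroup K] (u w : M × K) (a : Fin 6) :
    shval u w a = (shval u.1 w.1 a, shval u.2 w.2 a) := by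
  fin_cases a <;> rfl

lemma k4val_pair {M K : Type*} [AddCommGroup M] [AddCommGroup K] (u w : M × K) (a : Fin 3) :
    k4val u w a = (k4val u.1 w.1 a, k4val u.2 w.2 a) := by
  fin_cases a <;> rfl

lemma cval_pair {M K : Type*} [AddCommGroup M] [AddCommGroup K] (c : M × K) (a : Fin 3) :
    cval c a = (cval c.1 a, cval c.2 a) := by
  fin_cases a <;> rfl

lemma shval_map {M N : Type*} [AddCommGroup M] [AddCommGroup N] (f : M →+ N) (u w : M)
    (a : Fin 6) : f (shval u w a) = shval (f u) (f w) a := by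
  fin_cases a <;> simp [shval]

lemma k4val_map {M N : Type*} [AddCommGroup M] [AddCommGroup N] (f : M →+ N) (u w : M)
    (a : Fin 3) : f (k4val u w a) = k4val (f u) (f w) a := by
  fin_cases a <;> simp [k4val]

lemma cval_map {M N : Type*} [AddCommGroup M] [AddCommGroup N] (f : M →+ N) (c : M)
    (a : Fin 3) : f (cval c a) = cval (f c) a := by
  fin_cases a <;> simp [cval]

/-- Appending two extra coordinates to a function on `Fin k`. -/
def appendE (k : ℕ) (A : Type*) [AddCommGroup A] :
    ((Fin k → A) × (A × A)) ≃+ (Fin (k+2) → A) where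
  toFun p := fun t => if h : t.1 < k then p.1 ⟨t.1, h⟩ else if t.1 = k then p.2.1 else p.2.2
  invFun f := (fun i => f ⟨i.1, by omega⟩, (f ⟨k, by omega⟩, f ⟨k+1, by omega⟩))
  left_inv p := by
    refine Prod.ext (funext fun i => ?_) (Prod.ext ?_ ?_)
    · show (if h : (i:ℕ) < k then p.1 ⟨i, h⟩ else if (i:ℕ) = k then p.2.1 else p.2.2) = p.1 i
      rw [dif_pos i.2]
    · show (if h : k < k then p.1 ⟨k, h⟩ else if k = k then p.2.1 else p.2.2) = p.2.1
      rw [dif_neg (lt_irrefl k), if_pos rfl]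
    · show (if h : k+1 < k then p.1 ⟨k+1, h⟩ else if k+1 = k then p.2.1 else p.2.2) = p.2.2
      rw [dif_neg (fun hh => Nat.lt_irrefl k (Nat.lt_of_succ_lt hh)), if_neg (Nat.succ_ne_self k)]
  right_inv f := by
    funext t
    show (if h : (t:ℕ) < k then f ⟨(t:ℕ), by omega⟩ else if (t:ℕ) = k then f ⟨k, by omega⟩
      else f ⟨k+1, by omega⟩) = f t
    split_ifs with h1 h2
    · exact congrArg f (Fin.ext rfl)
    · exact congrArg f (Fin.ext h2.symm)
    · have ht := t.2
      exact congrArg f (Fin.ext (show k+1 = (t:ℕ) from by omega))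
  map_add' p q := by
    funext t
    simp only [Pi.add_apply]
    split_ifs <;> rfl

/-- The family of column data giving an additive perfect code with syndrome space
`(ℤ/4)^k`, together with complete mappings used in the inductive step. -/
structure Fam (k : ℕ) where
  M : Type
  W : Type
  [grpM : AddCommGroup M]
  [grpW : AddCommGroup W]
  eM : M ≃+ (Fin k → ZMod 4)
  eW : W ≃+ (Fin k → ZMod 2)
  ι : Type
  κ : Type
  [fι : Fintype ι]
  [fκ : Fintype κ]
  u : ι → M
  w : ι → M
  u' : κ → W
  w' : κ → W
  c : Fin 4 → M
  j : W →+ M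
  hj : ∀ (v : W) (i : Fin k), eM (j v) i = z2toZ4 (eW v i)
  bij : Function.Bijective (fval j u w u' w' c)
  σ : M ≃+ M
  hσ : Function.Bijective (fun x : M => x + σ x)
  σW : W ≃+ W
  hσW : Function.Bijective (fun x : W => x + σW x)
  hm : 6 * Fintype.card ι + 2^k + 8 = 4^k
  hn : 3 * Fintype.card κ + 5 = 2^k

attribute [instance] Fam.grpM Fam.grpW Fam.fι Fam.fκ

end Core

section Base

abbrev M3 := ZMod 4 × ZMod 4 × ZMod 4
abbrev W3 := ZMod 2 × ZMod 2 × ZMod 2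

def j3 : W3 →+ M3 where
  toFun v := (z2toZ4 v.1, z2toZ4 v.2.1, z2toZ4 v.2.2)
  map_zero' := rfl
  map_add' := by decide

def bu : Fin 8 → M3 := ![(0,0,1),(0,1,2),(1,0,2),(1,1,2),(1,1,3),(1,2,2),(1,2,3),(1,3,0)]
def bw : Fin 8 → M3 := ![(0,1,0),(0,1,3),(1,0,3),(1,2,0),(1,2,1),(1,3,1),(1,3,2),(1,3,3)]
def bc : Fin 4 → M3 := ![(1,0,0),(1,0,1),(1,1,0),(1,1,1)]
def bu' : Fin 1 → W3 := ![(0,0,1)]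
def bw' : Fin 1 → W3 := ![(0,1,0)]

lemma base_bij : Function.Bijective (fval j3 bu bw bu' bw' bc) := ⟨by decide, by decide⟩

def eM3 : M3 ≃+ (Fin 3 → ZMod 4) where
  toFun p := ![p.1, p.2.1, p.2.2]
  invFun f := (f 0, f 1, f 2)
  left_inv p := rfl
  right_inv f := by funext i; fin_cases i <;> rfl
  map_add' p q := by funext i; fin_cases i <;> rfl

def eW3 : W3 ≃+ (Fin 3 → ZMod 2) where
  toFun p := ![p.1, p.2.1, p.2.2]
  invFun f := (f 0, f 1, f 2)
  left_inv p := rfl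
  right_inv f := by funext i; fin_cases i <;> rfl
  map_add' p q := by funext i; fin_cases i <;> rfl

def σ3fun : M3 → M3 := fun p => (p.2.2, p.1 + p.2.2, p.2.1)

lemma σ3_bij : Function.Bijective σ3fun := ⟨by decide, by decide⟩

noncomputable def σ3 : M3 ≃+ M3 := AddEquiv.mk' (Equiv.ofBijective _ σ3_bij) (by decide)

def σW3fun : W3 → W3 := fun p => (p.2.2, p.1 + p.2.2, p.2.1)

lemma σW3_bij : Function.Bijective σW3fun := ⟨by decide, by decide⟩

noncomputable def σW3 : W3 ≃+ W3 := AddEquiv.mk' (Equiv.ofBijective _ σW3_bij) (by decide)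

noncomputable def famBase : Fam 3 where
  M := M3
  W := W3
  eM := eM3
  eW := eW3
  ι := Fin 8
  κ := Fin 1
  u := bu
  w := bw
  u' := bu'
  w' := bw'
  c := bc
  j := j3
  hj := by decide
  bij := base_bij
  σ := σ3
  hσ := by
    have h : (fun x : M3 => x + σ3 x) = fun x => x + σ3fun x := rfl
    rw [h]; exact ⟨by decide, by decide⟩
  σW := σW3
  hσW := by
    have h : (fun x : W3 => x + σW3 x) = fun x => x + σW3fun x := rfl
    rw [h]; exact ⟨by decide, by decide⟩
  hm := by norm_num
  hn := by norm_num

end Base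

section StepConsts

/-- Two-coordinate syndrome block for `ℤ/4`. -/
abbrev KK := ZMod 4 × ZMod 4
/-- Two-coordinate syndrome block for `ℤ/2`. -/
abbrev LL := ZMod 2 × ZMod 2

def jLL : LL →+ KK where
  toFun v := (z2toZ4 v.1, z2toZ4 v.2)
  map_zero' := rfl
  map_add' := by decide

def uK : Fin 2 → KK
  | 0 => (1,0)
  | 1 => (1,2)

def wK : Fin 2 → KK
  | 0 => (0,1)
  | 1 => (1,3)

def swp : Fin 6 → Fin 6
  | 0 => 1
  | 1 => 0
  | 2 => 3
  | 3 => 2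
  | 4 => 5
  | 5 => 4

def ωK : KK ≃+ KK where
  toFun p := (3*p.2, p.1 + 3*p.2)
  invFun p := (p.2 - p.1, 3*p.1)
  left_inv := by decide
  right_inv := by decide
  map_add' := by decide

def ωL : LL ≃+ LL where
  toFun p := (p.2, p.1 + p.2)
  invFun p := (p.1 + p.2, p.1)
  left_inv := by decide
  right_inv := by decide
  map_add' := by decide

lemma ωK_bij : Function.Bijective (fun b : KK => b + ωK b) := ⟨by decide, by decide⟩
lemma ωL_bij : Function.Bijective (fun b : LL => b + ωL b) := ⟨by decide, by decide⟩

lemma dShr0 : ∀ (t : Fin 2) (a : Fin 6), shval (uK t) (wK t) a ≠ 0 := by decide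
lemma dX0 : ∀ a : Fin 6, shval ((2,0) : KK) (0,2) a ≠ 0 := by decide
lemma dW0 : ∀ b : Fin 3, jLL (k4val (1,0) (0,1) b) ≠ 0 := by decide
lemma dShrShr : ∀ t a t' a', shval (uK t) (wK t) a = shval (uK t') (wK t') a' →
    t = t' ∧ a = a' := by decide
lemma dShrX : ∀ t a a', shval (uK t) (wK t) a ≠ shval ((2,0) : KK) (0,2) a' := by decide
lemma dShrW : ∀ t a b, shval (uK t) (wK t) a ≠ jLL (k4val (1,0) (0,1) b) := by decide
lemma dXX : ∀ a a', shval ((2,0) : KK) (0,2) a = shval ((2,0) : KK) (0,2) a' →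
    a = a' ∨ a = swp a' := by decide
lemma dWW : ∀ b b', jLL (k4val (1,0) (0,1) b) = jLL (k4val (1,0) (0,1) b') → b = b' := by decide

end StepConsts

section Step

variable {k : ℕ} (F : Fam k)

local instance instDM : DecidableEq F.M := F.eM.toEquiv.decidableEq
local instance instDW : DecidableEq F.W := F.eW.toEquiv.decidableEq
local instance instFM : Fintype F.M := Fintype.ofEquiv _ F.eM.toEquiv.symm
local instance instFW : Fintype F.W := Fintype.ofEquiv _ F.eW.toEquiv.symm

variable {F}

lemma W2F (v : F.W) : v + v = 0 := by
  apply F.eW.injective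
  rw [map_add, map_zero]
  funext i
  exact (by decide : ∀ a : ZMod 2, a + a = 0) _

lemma jtorF (x : F.W) : F.j x + F.j x = 0 := by
  rw [← map_add, W2F, map_zero]

lemma jinjF : Function.Injective F.j := by
  intro a b h
  apply F.eW.injective
  funext i
  have h2 : F.eM (F.j a) i = F.eM (F.j b) i := by rw [h]
  rw [F.hj, F.hj] at h2
  exact (by decide : ∀ x y : ZMod 2, z2toZ4 x = z2toZ4 y → x = y) _ _ h2

lemma jsurjF {v : F.M} (hv : v + v = 0) : ∃ x, F.j x = v := by
  have h2 : ∀ i, F.eM v i + F.eM v i = 0 := by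
    intro i
    have : F.eM (v + v) = 0 := by rw [hv, map_zero]
    rw [map_add] at this
    exact congrFun this i
  have h3 : ∀ i, ∃ b : ZMod 2, z2toZ4 b = F.eM v i := by
    intro i
    exact (by decide : ∀ a : ZMod 4, a + a = 0 → ∃ b, z2toZ4 b = a) _ (h2 i)
  choose g hg using h3
  refine ⟨F.eW.symm g, ?_⟩
  apply F.eM.injective
  funext i
  rw [F.hj]
  rw [AddEquiv.apply_symm_apply]
  exact hg i

lemma negnt {x : F.M} (h : x + x ≠ 0) : -x + -x ≠ 0 := by
  intro h0
  apply h
  rwa [← neg_add, neg_eq_zero] at h0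

lemma σnt {x : F.M} (h : x + x ≠ 0) : F.σ x + F.σ x ≠ 0 := by
  intro h0
  apply h
  apply F.σ.injective
  rw [map_add, map_zero]
  exact h0

lemma s1nt {x : F.M} (h : x + x ≠ 0) : (x + F.σ x) + (x + F.σ x) ≠ 0 := by
  intro h0
  apply h
  have := F.hσ.1 (a₁ := x + x) (a₂ := 0) ?_
  · exact this
  · show (x + x) + F.σ (x + x) = 0 + F.σ 0
    rw [map_add, map_zero, add_zero]
    calc x + x + (F.σ x + F.σ x) = x + F.σ x + (x + F.σ x) := by abel
      _ = 0 := h0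

lemma Xmnt {x : F.M} (h : x + x ≠ 0) (a : Fin 6) :
    shval x (F.σ x) a + shval x (F.σ x) a ≠ 0 := by
  fin_cases a
  · exact h
  · exact negnt h
  · exact σnt h
  · exact negnt (σnt h)
  · exact s1nt h
  · exact negnt (s1nt h)

variable (F)

/-- Encoding of `F.M` into naturals, used to pick representatives of `±`-pairs. -/
noncomputable def encF : F.M → ℕ := fun v => ((Fintype.equivFin F.M) v).val

/-- The chosen representatives of the antipodal pairs of elements of order 4. -/
def Xpred : F.M → Prop := fun v => (v + v ≠ 0) ∧ encF F v < encF F (-v)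

noncomputable local instance instXdec : DecidablePred (Xpred F) := fun _ =>
  Classical.dec _

variable {F}

lemma encF_inj : Function.Injective (encF F) := fun a b h =>
  (Fintype.equivFin F.M).injective (Fin.ext h)

lemma Xcontra {x y : F.M} (hx : Xpred F x) (hy : Xpred F y) (h : x = -y) : False := by
  subst h
  have h1 := hx.2
  rw [neg_neg] at h1
  exact lt_asymm h1 hy.2

lemma Xsplit {v : F.M} (hv : v + v ≠ 0) : Xpred F v ∨ Xpred F (-v) := by
  have hne : v ≠ -v := by
    intro h
    apply hv
    nth_rewrite 2 [h]
    exact add_neg_cancel v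
  have henc : encF F v ≠ encF F (-v) := fun h => hne (encF_inj h)
  rcases lt_or_gt_of_ne henc with h | h
  · exact Or.inl ⟨hv, h⟩
  · refine Or.inr ⟨negnt hv, ?_⟩
    rwa [neg_neg]

variable (F)

/-- Index type for the Shrikhande columns of the extended family. -/
abbrev SIdx : Type := F.ι ⊕ ((Fin 2 × F.M) ⊕ {x : F.M // Xpred F x})
/-- Index type for the `K₄` columns of the extended family. -/
abbrev KIdx : Type := F.κ ⊕ F.W

noncomputable local instance instXfin : Fintype {x : F.M // Xpred F x} :=
  Fintype.ofFinite _

def nu : SIdx F → F.M × KK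
  | .inl i => (F.u i, 0)
  | .inr (.inl (t, x)) => (x, uK t)
  | .inr (.inr x) => (x.1, (2,0))

def nw : SIdx F → F.M × KK
  | .inl i => (F.w i, 0)
  | .inr (.inl (t, x)) => (F.σ x, wK t)
  | .inr (.inr x) => (F.σ x.1, (0,2))

def nu' : KIdx F → F.W × LL
  | .inl p => (F.u' p, 0)
  | .inr x => (x, (1,0))

def nw' : KIdx F → F.W × LL
  | .inl p => (F.w' p, 0)
  | .inr x => (F.σW x, (0,1))

def nc : Fin 4 → F.M × KK := fun l => (F.c l, 0)

def nj : F.W × LL →+ F.M × KK := F.j.prodMap jLL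

/-- The extended syndrome-value function. -/
noncomputable def G : Option (Spec (SIdx F) (KIdx F)) → F.M × KK :=
  fval (nj F) (nu F) (nw F) (nu' F) (nw' F) (nc F)

/-- First components of the values of `G`. -/
noncomputable def G1 : Option (Spec (SIdx F) (KIdx F)) → F.M
  | none => 0
  | some (.inl (.inl i, a)) => shval (F.u i) (F.w i) a
  | some (.inl (.inr (.inl (_, x)), a)) => shval x (F.σ x) a
  | some (.inl (.inr (.inr x), a)) => shval x.1 (F.σ x.1) a
  | some (.inr (.inl (.inl p, b))) => F.j (k4val (F.u' p) (F.w' p) b)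
  | some (.inr (.inl (.inr xw, b))) => F.j (k4val xw (F.σW xw) b)
  | some (.inr (.inr (l, b))) => cval (F.c l) b

/-- Second components of the values of `G`. -/
def KC : Option (Spec (SIdx F) (KIdx F)) → KK
  | none => 0
  | some (.inl (.inl _, _)) => 0
  | some (.inl (.inr (.inl (t, _)), a)) => shval (uK t) (wK t) a
  | some (.inl (.inr (.inr _), a)) => shval ((2,0) : KK) (0,2) a
  | some (.inr (.inl (.inl _, _))) => 0
  | some (.inr (.inl (.inr _, b))) => jLL (k4val (1,0) (0,1) b)
  | some (.inr (.inr _)) => 0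

lemma Gcomp : ∀ s, G F s = (G1 F s, KC F s) := by
  rintro (_ | (⟨i | (⟨t, x⟩ | x), a⟩ | (⟨p | xw, b⟩ | ⟨l, b⟩))) <;>
    simp only [G, fval, G1, KC, nu, nw, nu', nw', nc, nj, shval_pair, k4val_pair, cval_pair,
      shval_zero, k4val_zero, cval_zero, AddMonoidHom.coe_prodMap, map_zero, Prod.map_apply,
      Prod.mk_zero_zero]

lemma Ginj : Function.Injective (G F) := by
  intro s s' h
  rw [Gcomp, Gcomp] at h
  simp only [Prod.mk.injEq] at h
  obtain ⟨h1, h2⟩ := h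
  rcases s with _ | (⟨i | (⟨t, x⟩ | ⟨x, hx⟩), a⟩ | (⟨p | xw, b⟩ | ⟨l, b⟩)) <;>
    rcases s' with _ | (⟨i' | (⟨t', x'⟩ | ⟨x', hx'⟩), a'⟩ | (⟨p' | xw', b'⟩ | ⟨l', b'⟩))
  -- row 1 : s = none
  · rfl
  · have h3 := F.bij.1 (a₁ := none) (a₂ := some (.inl (i', a'))) h1
    exact absurd h3 (by simp)
  · exact absurd h2.symm (dShr0 t' a')
  · exact absurd h2.symm (dX0 a')
  · have h3 := F.bij.1 (a₁ := none) (a₂ := some (.inr (.inl (p', b')))) h1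
    exact absurd h3 (by simp)
  · exact absurd h2.symm (dW0 b')
  · have h3 := F.bij.1 (a₁ := none) (a₂ := some (.inr (.inr (l', b')))) h1
    exact absurd h3 (by simp)
  -- row 2 : s = old ι
  · have h3 := F.bij.1 (a₁ := some (.inl (i, a))) (a₂ := none) h1
    exact absurd h3 (by simp)
  · have h3 := F.bij.1 (a₁ := some (.inl (i, a))) (a₂ := some (.inl (i', a'))) h1
    simp only [Option.some.injEq, Sum.inl.injEq, Prod.mk.injEq] at h3
    obtain ⟨rfl, rfl⟩ := h3
    rfl
  · exact absurd h2.symm (dShr0 t' a')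
  · exact absurd h2.symm (dX0 a')
  · have h3 := F.bij.1 (a₁ := some (.inl (i, a))) (a₂ := some (.inr (.inl (p', b')))) h1
    exact absurd h3 (by simp)
  · exact absurd h2.symm (dW0 b')
  · have h3 := F.bij.1 (a₁ := some (.inl (i, a))) (a₂ := some (.inr (.inr (l', b')))) h1
    exact absurd h3 (by simp)
  -- row 3 : s = new Shrikhande
  · exact absurd h2 (dShr0 t a)
  · exact absurd h2 (dShr0 t a)
  · obtain ⟨rfl, rfl⟩ := dShrShr t a t' a' h2
    have hx : x = x' := by
      fin_cases a
      · exact h1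
      · exact neg_inj.mp h1
      · exact F.σ.injective h1
      · exact F.σ.injective (neg_inj.mp h1)
      · exact F.hσ.1 h1
      · exact F.hσ.1 (neg_inj.mp h1)
    subst hx
    rfl
  · exact absurd h2 (dShrX t a a')
  · exact absurd h2 (dShr0 t a)
  · exact absurd h2 (dShrW t a b')
  · exact absurd h2 (dShr0 t a)
  -- row 4 : s = new X
  · exact absurd h2 (dX0 a)
  · exact absurd h2 (dX0 a)
  · exact absurd h2.symm (dShrX t' a' a)
  · rcases dXX a a' h2 with heq | heq
    all_goals subst heq
    · have hxx : x = x' := by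
        fin_cases a
        · exact h1
        · exact neg_inj.mp h1
        · exact F.σ.injective h1
        · exact F.σ.injective (neg_inj.mp h1)
        · exact F.hσ.1 h1
        · exact F.hσ.1 (neg_inj.mp h1)
      subst hxx
      rfl
    · exfalso
      fin_cases a'
      · exact Xcontra hx' hx h1.symm
      · exact Xcontra hx hx' h1
      · exact Xcontra hx' hx
          (F.σ.injective (show F.σ x' = F.σ (-x) by rw [map_neg]; exact h1.symm))
      · exact Xcontra hx hx'
          (F.σ.injective (show F.σ x = F.σ (-x') by rw [map_neg]; exact h1))
      · refine Xcontra hx' hx (F.hσ.1 (a₁ := x') (a₂ := -x) ?_)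
        have h1' : -(x + F.σ x) = x' + F.σ x' := h1
        show x' + F.σ x' = -x + F.σ (-x)
        rw [map_neg, ← h1']
        abel
      · refine Xcontra hx hx' (F.hσ.1 (a₁ := x) (a₂ := -x') ?_)
        have h1' : x + F.σ x = -(x' + F.σ x') := h1
        show x + F.σ x = -x' + F.σ (-x')
        rw [map_neg, h1']
        abel
  · exact absurd h2 (dX0 a)
  · have h5 := jtorF (F := F) (k4val xw' (F.σW xw') b')
    have h1' : shval x (F.σ x) a = F.j (k4val xw' (F.σW xw') b') := h1
    rw [← h1'] at h5
    exact absurd h5 (Xmnt hx.1 a)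
  · exact absurd h2 (dX0 a)
  -- row 5 : s = old κ
  · have h3 := F.bij.1 (a₁ := some (.inr (.inl (p, b)))) (a₂ := none) h1
    exact absurd h3 (by simp)
  · have h3 := F.bij.1 (a₁ := some (.inr (.inl (p, b)))) (a₂ := some (.inl (i', a'))) h1
    exact absurd h3 (by simp)
  · exact absurd h2.symm (dShr0 t' a')
  · exact absurd h2.symm (dX0 a')
  · have h3 := F.bij.1 (a₁ := some (.inr (.inl (p, b)))) (a₂ := some (.inr (.inl (p', b')))) h1
    simp only [Option.some.injEq, Sum.inr.injEq, Sum.inl.injEq, Prod.mk.injEq] at h3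
    obtain ⟨rfl, rfl⟩ := h3
    rfl
  · exact absurd h2.symm (dW0 b')
  · have h3 := F.bij.1 (a₁ := some (.inr (.inl (p, b)))) (a₂ := some (.inr (.inr (l', b')))) h1
    exact absurd h3 (by simp)
  -- row 6 : s = new W
  · exact absurd h2 (dW0 b)
  · exact absurd h2 (dW0 b)
  · exact absurd h2.symm (dShrW t' a' b)
  · have h5 := jtorF (F := F) (k4val xw (F.σW xw) b)
    have h1' : F.j (k4val xw (F.σW xw) b) = shval x' (F.σ x') a' := h1
    rw [h1'] at h5
    exact absurd h5 (Xmnt hx'.1 a')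
  · exact absurd h2 (dW0 b)
  · obtain rfl := dWW b b' h2
    have h4 := jinjF h1
    have hxx : xw = xw' := by
      fin_cases b
      · exact h4
      · exact F.σW.injective h4
      · exact F.hσW.1 h4
    subst hxx
    rfl
  · exact absurd h2 (dW0 b)
  -- row 7 : s = old c
  · have h3 := F.bij.1 (a₁ := some (.inr (.inr (l, b)))) (a₂ := none) h1
    exact absurd h3 (by simp)
  · have h3 := F.bij.1 (a₁ := some (.inr (.inr (l, b)))) (a₂ := some (.inl (i', a'))) h1
    exact absurd h3 (by simp)
  · exact absurd h2.symm (dShr0 t' a')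
  · exact absurd h2.symm (dX0 a')
  · have h3 := F.bij.1 (a₁ := some (.inr (.inr (l, b)))) (a₂ := some (.inr (.inl (p', b')))) h1
    exact absurd h3 (by simp)
  · exact absurd h2.symm (dW0 b')
  · have h3 := F.bij.1 (a₁ := some (.inr (.inr (l, b)))) (a₂ := some (.inr (.inr (l', b')))) h1
    simp only [Option.some.injEq, Sum.inr.injEq, Prod.mk.injEq] at h3
    obtain ⟨rfl, rfl⟩ := h3
    rfl

variable {F}

lemma σsymm_nt {v : F.M} (hv : v + v ≠ 0) : F.σ.symm v + F.σ.symm v ≠ 0 := by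
  intro h0
  apply hv
  rw [← F.σ.apply_symm_apply v, ← map_add, h0, map_zero]

lemma Gsurj : Function.Surjective (G F) := by
  rintro ⟨v, y1, y2⟩
  fin_cases y1 <;> fin_cases y2
  -- y1 = 0
  · -- y = (0,0)
    obtain ⟨s₀, hs₀⟩ := F.bij.2 v
    rcases s₀ with _ | (⟨i, a⟩ | (⟨p, b⟩ | ⟨l, b⟩))
    · exact ⟨none, by rw [Gcomp]; exact Prod.ext hs₀ rfl⟩
    · exact ⟨some (.inl (.inl i, a)), by rw [Gcomp]; exact Prod.ext hs₀ rfl⟩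
    · exact ⟨some (.inr (.inl (.inl p, b))), by rw [Gcomp]; exact Prod.ext hs₀ rfl⟩
    · exact ⟨some (.inr (.inr (l, b))), by rw [Gcomp]; exact Prod.ext hs₀ rfl⟩
  · -- y = (0,1) : t = 0, a = 2
    refine ⟨some (.inl (.inr (.inl (0, F.σ.symm v)), 2)), ?_⟩
    rw [Gcomp]
    refine Prod.ext ?_ rfl
    show F.σ (F.σ.symm v) = v
    simp
  · -- y = (0,2) : torsion slot (0,2)
    by_cases hv : v + v = 0
    · obtain ⟨xw, hxw⟩ := jsurjF hv
      refine ⟨some (.inr (.inl (.inr (F.σW.symm xw), 1))), ?_⟩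
      rw [Gcomp]
      refine Prod.ext ?_ rfl
      show F.j (F.σW (F.σW.symm xw)) = v
      rw [F.σW.apply_symm_apply]
      exact hxw
    · rcases Xsplit (σsymm_nt hv) with h | h
      · refine ⟨some (.inl (.inr (.inr ⟨F.σ.symm v, h⟩), 2)), ?_⟩
        rw [Gcomp]
        refine Prod.ext ?_ rfl
        show F.σ (F.σ.symm v) = v
        simp
      · refine ⟨some (.inl (.inr (.inr ⟨-(F.σ.symm v), h⟩), 3)), ?_⟩
        rw [Gcomp]
        refine Prod.ext ?_ rfl
        show -(F.σ (-(F.σ.symm v))) = v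
        rw [map_neg, neg_neg]
        simp
  · -- y = (0,3) : t = 0, a = 3
    refine ⟨some (.inl (.inr (.inl (0, F.σ.symm (-v))), 3)), ?_⟩
    rw [Gcomp]
    refine Prod.ext ?_ rfl
    show -(F.σ (F.σ.symm (-v))) = v
    rw [F.σ.apply_symm_apply, neg_neg]
  -- y1 = 1
  · -- y = (1,0) : t = 0, a = 0
    exact ⟨some (.inl (.inr (.inl (0, v)), 0)), by rw [Gcomp]; exact Prod.ext rfl rfl⟩
  · -- y = (1,1) : t = 0, a = 4
    obtain ⟨x, hx⟩ := F.hσ.2 v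
    exact ⟨some (.inl (.inr (.inl (0, x)), 4)), by rw [Gcomp]; exact Prod.ext hx rfl⟩
  · -- y = (1,2) : t = 1, a = 0
    exact ⟨some (.inl (.inr (.inl (1, v)), 0)), by rw [Gcomp]; exact Prod.ext rfl rfl⟩
  · -- y = (1,3) : t = 1, a = 2
    refine ⟨some (.inl (.inr (.inl (1, F.σ.symm v)), 2)), ?_⟩
    rw [Gcomp]
    refine Prod.ext ?_ rfl
    show F.σ (F.σ.symm v) = v
    simp
  -- y1 = 2
  · -- y = (2,0) : torsion slot (2,0)
    by_cases hv : v + v = 0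
    · obtain ⟨xw, hxw⟩ := jsurjF hv
      exact ⟨some (.inr (.inl (.inr xw, 0))), by rw [Gcomp]; exact Prod.ext hxw rfl⟩
    · rcases Xsplit hv with h | h
      · exact ⟨some (.inl (.inr (.inr ⟨v, h⟩), 0)), by rw [Gcomp]; exact Prod.ext rfl rfl⟩
      · refine ⟨some (.inl (.inr (.inr ⟨-v, h⟩), 1)), ?_⟩
        rw [Gcomp]
        exact Prod.ext (neg_neg v) rfl
  · -- y = (2,1) : t = 1, a = 4
    obtain ⟨x, hx⟩ := F.hσ.2 v
    exact ⟨some (.inl (.inr (.inl (1, x)), 4)), by rw [Gcomp]; exact Prod.ext hx rfl⟩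
  · -- y = (2,2) : torsion slot (2,2)
    by_cases hv : v + v = 0
    · obtain ⟨xw, hxw⟩ := jsurjF hv
      obtain ⟨xx, hxx⟩ := F.hσW.2 xw
      have hxx' : xx + F.σW xx = xw := hxx
      refine ⟨some (.inr (.inl (.inr xx, 2))), ?_⟩
      rw [Gcomp]
      refine Prod.ext ?_ rfl
      show F.j (xx + F.σW xx) = v
      rw [hxx']
      exact hxw
    · obtain ⟨x1, hx1⟩ := F.hσ.2 v
      have hx1' : x1 + F.σ x1 = v := hx1
      have hnt : x1 + x1 ≠ 0 := by
        intro h0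
        apply hv
        calc v + v = (x1 + x1) + F.σ (x1 + x1) := by rw [map_add, ← hx1']; abel
          _ = 0 := by rw [h0, map_zero, add_zero]
      rcases Xsplit hnt with h | h
      · exact ⟨some (.inl (.inr (.inr ⟨x1, h⟩), 4)), by rw [Gcomp]; exact Prod.ext hx1' rfl⟩
      · refine ⟨some (.inl (.inr (.inr ⟨-x1, h⟩), 5)), ?_⟩
        rw [Gcomp]
        refine Prod.ext ?_ rfl
        show -(-x1 + F.σ (-x1)) = v
        rw [map_neg, ← hx1']
        abel
  · -- y = (2,3) : t = 1, a = 5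
    obtain ⟨x, hx⟩ := F.hσ.2 (-v)
    have hx' : x + F.σ x = -v := hx
    refine ⟨some (.inl (.inr (.inl (1, x)), 5)), ?_⟩
    rw [Gcomp]
    refine Prod.ext ?_ rfl
    show -(x + F.σ x) = v
    rw [hx', neg_neg]
  -- y1 = 3
  · -- y = (3,0) : t = 0, a = 1
    refine ⟨some (.inl (.inr (.inl (0, -v)), 1)), ?_⟩
    rw [Gcomp]
    exact Prod.ext (neg_neg v) rfl
  · -- y = (3,1) : t = 1, a = 3
    refine ⟨some (.inl (.inr (.inl (1, F.σ.symm (-v))), 3)), ?_⟩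
    rw [Gcomp]
    refine Prod.ext ?_ rfl
    show -(F.σ (F.σ.symm (-v))) = v
    rw [F.σ.apply_symm_apply, neg_neg]
  · -- y = (3,2) : t = 1, a = 1
    refine ⟨some (.inl (.inr (.inl (1, -v)), 1)), ?_⟩
    rw [Gcomp]
    exact Prod.ext (neg_neg v) rfl
  · -- y = (3,3) : t = 0, a = 5
    obtain ⟨x, hx⟩ := F.hσ.2 (-v)
    have hx' : x + F.σ x = -v := hx
    refine ⟨some (.inl (.inr (.inl (0, x)), 5)), ?_⟩
    rw [Gcomp]
    refine Prod.ext ?_ rfl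
    show -(x + F.σ x) = v
    rw [hx', neg_neg]

lemma cardM : Fintype.card F.M = 4^k :=
  calc Fintype.card F.M = Fintype.card (Fin k → ZMod 4) := Fintype.card_congr F.eM.toEquiv
    _ = (Fintype.card (ZMod 4))^k := by rw [Fintype.card_fun, Fintype.card_fin]
    _ = 4^k := by rw [ZMod.card]

lemma cardW : Fintype.card F.W = 2^k :=
  calc Fintype.card F.W = Fintype.card (Fin k → ZMod 2) := Fintype.card_congr F.eW.toEquiv
    _ = (Fintype.card (ZMod 2))^k := by rw [Fintype.card_fun, Fintype.card_fin]
    _ = 2^k := by rw [ZMod.card]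

lemma cardT : Fintype.card {v : F.M // v + v = 0} = 2^k := by
  have e1 : {v : F.M // v + v = 0} ≃ {f : Fin k → ZMod 4 // f + f = 0} :=
    F.eM.toEquiv.subtypeEquiv (fun a => by
      constructor
      · intro h
        show F.eM a + F.eM a = 0
        rw [← map_add, h, map_zero]
      · intro h
        apply F.eM.injective
        rw [map_add, map_zero]
        exact h)
  have e2 : {f : Fin k → ZMod 4 // f + f = 0} ≃ {f : Fin k → ZMod 4 // ∀ i, f i + f i = 0} :=
    Equiv.subtypeEquivRight (fun f => by
      constructor
      · intro h i
        exact congrFun h i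
      · intro h
        funext i
        exact h i)
  have e3 := Equiv.subtypePiEquivPi (p := fun (_ : Fin k) (x : ZMod 4) => x + x = 0)
  rw [Fintype.card_congr ((e1.trans e2).trans e3), Fintype.card_fun, Fintype.card_fin]
  have h2 : Fintype.card {b : ZMod 4 // b + b = 0} = 2 := by decide
  rw [h2]

/-- Each antipodal pair of order-4 elements has exactly one representative in `Xpred`. -/
lemma cardX2 : 2 * Fintype.card {x : F.M // Xpred F x} = 4^k - 2^k := by
  have nX : ∀ {x : F.M}, Xpred F x → ¬ Xpred F (-x) := fun {x} hx h' =>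
    (Xcontra hx h' (neg_neg x).symm).elim
  have e : Bool × {x : F.M // Xpred F x} ≃ {v : F.M // ¬ (v + v = 0)} :=
    { toFun := fun p => match p with
        | (true, x) => ⟨x.1, x.2.1⟩
        | (false, x) => ⟨-x.1, negnt x.2.1⟩
      invFun := fun v => if h : Xpred F v.1 then (true, ⟨v.1, h⟩)
        else (false, ⟨-v.1, (Xsplit v.2).resolve_left h⟩)
      left_inv := by
        rintro ⟨b, ⟨x, hx⟩⟩
        cases b
        · show (if h : Xpred F (-x) then _ else _) = _
          rw [dif_neg (nX hx)]
          exact Prod.ext rfl (Subtype.ext (neg_neg x))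
        · show (if h : Xpred F x then _ else _) = _
          rw [dif_pos hx]
      right_inv := by
        rintro ⟨v, hv⟩
        dsimp only
        by_cases h : Xpred F v
        · rw [dif_pos h]
        · rw [dif_neg h]
          exact Subtype.ext (neg_neg v) }
  calc 2 * Fintype.card {x : F.M // Xpred F x}
      = Fintype.card (Bool × {x : F.M // Xpred F x}) := by
        rw [Fintype.card_prod, Fintype.card_bool]
    _ = Fintype.card {v : F.M // ¬ (v + v = 0)} := Fintype.card_congr e
    _ = 4^k - 2^k := by
        rw [Fintype.card_subtype_compl, cardM, cardT]

/-- The inductive step: from a perfect-code family for `k` build one for `k+2`. -/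
noncomputable def famStep : Fam (k+2) where
  M := F.M × KK
  W := F.W × LL
  eM := (F.eM.prodCongr (AddEquiv.refl KK)).trans (appendE k (ZMod 4))
  eW := (F.eW.prodCongr (AddEquiv.refl LL)).trans (appendE k (ZMod 2))
  ι := SIdx F
  κ := KIdx F
  u := nu F
  w := nw F
  u' := nu' F
  w' := nw' F
  c := nc F
  j := nj F
  hj := by
    rintro ⟨v1, v2⟩ i
    show (if h : (i:ℕ) < k then F.eM (F.j v1) ⟨i, h⟩ else if (i:ℕ) = k then (jLL v2).1
        else (jLL v2).2)
      = z2toZ4 (if h : (i:ℕ) < k then F.eW v1 ⟨i, h⟩ else if (i:ℕ) = k then v2.1 else v2.2)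
    split_ifs with h1 h2
    · exact F.hj v1 ⟨i, h1⟩
    · rfl
    · rfl
  bij := ⟨Ginj F, Gsurj⟩
  σ := F.σ.prodCongr ωK
  hσ := by
    have h : (fun x : F.M × KK => x + (F.σ.prodCongr ωK) x)
        = Prod.map (fun a => a + F.σ a) (fun b => b + ωK b) := rfl
    rw [h]
    exact F.hσ.prodMap ωK_bij
  σW := F.σW.prodCongr ωL
  hσW := by
    have h : (fun x : F.W × LL => x + (F.σW.prodCongr ωL) x)
        = Prod.map (fun a => a + F.σW a) (fun b => b + ωL b) := rfl
    rw [h]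
    exact F.hσW.prodMap ωL_bij
  hm := by
    have hx2 := cardX2 (F := F)
    have hmm := F.hm
    have hle : (2:ℕ)^k ≤ 4^k := Nat.pow_le_pow_left (by norm_num) k
    have hc : Fintype.card (SIdx F)
        = Fintype.card F.ι + (2 * 4^k + Fintype.card {x : F.M // Xpred F x}) := by
      rw [Fintype.card_sum, Fintype.card_sum, Fintype.card_prod, Fintype.card_fin,
        cardM (F := F)]
    rw [hc]
    have p1 : (4:ℕ)^(k+2) = 16 * 4^k := by ring
    have p2 : (2:ℕ)^(k+2) = 4 * 2^k := by ring
    omega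
  hn := by
    have hc : Fintype.card (KIdx F) = Fintype.card F.κ + 2^k := by
      rw [Fintype.card_sum, cardW (F := F)]
    rw [hc]
    have hnn := F.hn
    have p2 : (2:ℕ)^(k+2) = 4 * 2^k := by ring
    omega

end Step

/-- Families exist for every odd `k ≥ 3`. -/
lemma famExists : ∀ n : ℕ, Nonempty (Fam (3 + 2*n))
  | 0 => ⟨famBase⟩
  | n+1 => by
      obtain ⟨F⟩ := famExists n
      exact ⟨famStep (F := F)⟩

section Assembly

lemma z2toZ4_zero : z2toZ4 0 = 0 := by decide
lemma z2toZ4_add : ∀ a b : ZMod 2, z2toZ4 (a + b) = z2toZ4 a + z2toZ4 b := by decide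

/-- Coordinatewise `z2toZ4` as an additive homomorphism. -/
def j0 (k : ℕ) : (Fin k → ZMod 2) →+ (Fin k → ZMod 4) where
  toFun f := fun i => z2toZ4 (f i)
  map_zero' := funext fun _ => z2toZ4_zero
  map_add' a b := funext fun i => z2toZ4_add (a i) (b i)


lemma dot_two {N : ℕ} {R : Type*} [NonUnitalNonAssocSemiring R] (f g : Fin N → R)
    (qa qb : Fin N) (hne : qa ≠ qb) (hz : ∀ q, q ≠ qa → q ≠ qb → g q = 0) :
    ∑ q, f q * g q = f qa * g qa + f qb * g qb :=
  calc ∑ q, f q * g q = ∑ q ∈ ({qa, qb} : Finset (Fin N)), f q * g q := by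
        refine (Finset.sum_subset (Finset.subset_univ _) ?_).symm
        intro q _ hq
        simp only [Finset.mem_insert, Finset.mem_singleton, not_or] at hq
        rw [hz q hq.1 hq.2, mul_zero]
    _ = f qa * g qa + f qb * g qb := Finset.sum_pair hne

lemma dot_one {N : ℕ} {R : Type*} [NonUnitalNonAssocSemiring R] (f g : Fin N → R)
    (qa : Fin N) (hz : ∀ q, q ≠ qa → g q = 0) :
    ∑ q, f q * g q = f qa * g qa := by
  refine Finset.sum_eq_single qa (fun q _ hq => by rw [hz q hq, mul_zero]) ?_
  intro h
  exact absurd (Finset.mem_univ qa) h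

variable {k m n' : ℕ}

/-- The Shrikhande part of the check matrix. -/
def bA (u w : Fin m → Fin k → ZMod 4) : Matrix (Fin k) (Fin (2*m)) (ZMod 4) :=
  fun t q => if q.1 % 2 = 0 then u ⟨q.1/2, by have := q.2; omega⟩ t
    else w ⟨q.1/2, by have := q.2; omega⟩ t

/-- The `K₄` part of the check matrix. -/
def bA' (u' w' : Fin n' → Fin k → ZMod 2) : Matrix (Fin k) (Fin (2*n')) (ZMod 2) :=
  fun t q => if q.1 % 2 = 0 then u' ⟨q.1/2, by have := q.2; omega⟩ t
    else w' ⟨q.1/2, by have := q.2; omega⟩ t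

/-- The `ℤ/4` part of the check matrix. -/
def bA'' (c : Fin 4 → Fin k → ZMod 4) : Matrix (Fin k) (Fin 4) (ZMod 4) :=
  fun t l => c l t

def shrCoef : Fin 6 → ZMod 4 × ZMod 4
  | 0 => (1,0)
  | 1 => (3,0)
  | 2 => (0,1)
  | 3 => (0,3)
  | 4 => (1,1)
  | 5 => (3,3)

def k4Coef : Fin 3 → ZMod 2 × ZMod 2
  | 0 => (1,0)
  | 1 => (0,1)
  | 2 => (1,1)

def cCoef : Fin 3 → ZMod 4
  | 0 => 1
  | 1 => 2
  | 2 => 3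

/-- The ball element (codeword error pattern) corresponding to a spec. -/
def ballElem : Option (Spec (Fin m) (Fin n')) → DoobV m n' 4
  | none => 0
  | some (.inl (i, a)) =>
      (fun q => if q.1 = 2*i.1 then (shrCoef a).1 else if q.1 = 2*i.1+1 then (shrCoef a).2
        else 0, 0, 0)
  | some (.inr (.inl (p, b))) =>
      (0, fun q => if q.1 = 2*p.1 then (k4Coef b).1 else if q.1 = 2*p.1+1 then (k4Coef b).2
        else 0, 0)
  | some (.inr (.inr (l, b))) => (0, 0, fun q => if q = l then cCoef b else 0)

variable (u w : Fin m → Fin k → ZMod 4) (u' w' : Fin n' → Fin k → ZMod 2)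
  (c : Fin 4 → Fin k → ZMod 4)

/-- The syndrome map as an additive homomorphism. -/
def synHom : DoobV m n' 4 →+ (Fin k → ZMod 4) where
  toFun := syndrome (bA u w) (bA' u' w') (bA'' c)
  map_zero' := by
    funext t
    simp [syndrome, Matrix.mulVec_zero, z2toZ4_zero]
  map_add' x y := by
    funext t
    simp only [syndrome, Prod.fst_add, Prod.snd_add, Matrix.mulVec_add, Pi.add_apply,
      z2toZ4_add]
    abel

lemma syn_ball (s : Option (Spec (Fin m) (Fin n'))) :
    synHom u w u' w' c (ballElem s) = fval (j0 k) u w u' w' c s := by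
  have e3 : (3 : ZMod 4) = -1 := by decide
  have h2 : ∀ x : ZMod 4, x * 2 = x + x := by decide
  rcases s with _ | (⟨i, a⟩ | (⟨p, b⟩ | ⟨l, b⟩))
  · exact map_zero _
  · funext t
    have hq2 : 2*i.1 < 2*m := by have := i.2; omega
    have hq2' : 2*i.1+1 < 2*m := by have := i.2; omega
    have hne : (⟨2*i.1, hq2⟩ : Fin (2*m)) ≠ ⟨2*i.1+1, hq2'⟩ :=
      Fin.ne_of_val_ne (by omega : (2*i.1 : ℕ) ≠ 2*i.1+1)
    have hsum : (bA u w).mulVec (ballElem (some (.inl (i, a))) : DoobV m n' 4).1 t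
        = u i t * (shrCoef a).1 + w i t * (shrCoef a).2 := by
      show ∑ q, bA u w t q * _ = _
      rw [dot_two _ _ ⟨2*i.1, hq2⟩ ⟨2*i.1+1, hq2'⟩ hne ?zeros]
      case zeros =>
        intro q hqa hqb
        have ha : q.1 ≠ 2*i.1 := fun h => hqa (Fin.ext h)
        have hb : q.1 ≠ 2*i.1+1 := fun h => hqb (Fin.ext h)
        show (if q.1 = 2*i.1 then _ else if q.1 = 2*i.1+1 then _ else 0) = 0
        rw [if_neg ha, if_neg hb]
      have hA1 : bA u w t ⟨2*i.1, hq2⟩ = u i t := by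
        show (if (2*i.1) % 2 = 0 then _ else _) = _
        rw [if_pos (by omega)]
        exact congrFun (congrArg u (Fin.ext (show 2*i.1/2 = i.1 from by omega))) t
      have hA2 : bA u w t ⟨2*i.1+1, hq2'⟩ = w i t := by
        show (if (2*i.1+1) % 2 = 0 then _ else _) = _
        rw [if_neg (by omega)]
        exact congrFun (congrArg w (Fin.ext (show (2*i.1+1)/2 = i.1 from by omega))) t
      have hE1 : (ballElem (some (.inl (i, a))) : DoobV m n' 4).1 ⟨2*i.1, hq2⟩
          = (shrCoef a).1 := by
        show (if (2*i.1 : ℕ) = 2*i.1 then _ else _) = _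
        rw [if_pos rfl]
      have hE2 : (ballElem (some (.inl (i, a))) : DoobV m n' 4).1 ⟨2*i.1+1, hq2'⟩
          = (shrCoef a).2 := by
        show (if (2*i.1+1 : ℕ) = 2*i.1 then _ else _) = _
        rw [if_neg (by omega), if_pos rfl]
      rw [hA1, hA2, hE1, hE2]
    show (bA u w).mulVec _ t + z2toZ4 ((bA' u' w').mulVec 0 t) + (bA'' c).mulVec 0 t = _
    rw [Matrix.mulVec_zero, Matrix.mulVec_zero, hsum]
    show _ + z2toZ4 0 + (0 : Fin k → ZMod 4) t = shval (u i) (w i) a t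
    rw [z2toZ4_zero]
    fin_cases a <;>
      · simp [shrCoef, shval, Pi.add_apply, Pi.neg_apply, e3, mul_neg_one, neg_add]
        try abel
  · funext t
    have hq2 : 2*p.1 < 2*n' := by have := p.2; omega
    have hq2' : 2*p.1+1 < 2*n' := by have := p.2; omega
    have hne : (⟨2*p.1, hq2⟩ : Fin (2*n')) ≠ ⟨2*p.1+1, hq2'⟩ :=
      Fin.ne_of_val_ne (by omega : (2*p.1 : ℕ) ≠ 2*p.1+1)
    have hsum : (bA' u' w').mulVec (ballElem (some (.inr (.inl (p, b)))) : DoobV m n' 4).2.1 t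
        = u' p t * (k4Coef b).1 + w' p t * (k4Coef b).2 := by
      show ∑ q, bA' u' w' t q * _ = _
      rw [dot_two _ _ ⟨2*p.1, hq2⟩ ⟨2*p.1+1, hq2'⟩ hne ?zeros]
      case zeros =>
        intro q hqa hqb
        have ha : q.1 ≠ 2*p.1 := fun h => hqa (Fin.ext h)
        have hb : q.1 ≠ 2*p.1+1 := fun h => hqb (Fin.ext h)
        show (if q.1 = 2*p.1 then _ else if q.1 = 2*p.1+1 then _ else 0) = 0
        rw [if_neg ha, if_neg hb]
      have hA1 : bA' u' w' t ⟨2*p.1, hq2⟩ = u' p t := by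
        show (if (2*p.1) % 2 = 0 then _ else _) = _
        rw [if_pos (by omega)]
        exact congrFun (congrArg u' (Fin.ext (show 2*p.1/2 = p.1 from by omega))) t
      have hA2 : bA' u' w' t ⟨2*p.1+1, hq2'⟩ = w' p t := by
        show (if (2*p.1+1) % 2 = 0 then _ else _) = _
        rw [if_neg (by omega)]
        exact congrFun (congrArg w' (Fin.ext (show (2*p.1+1)/2 = p.1 from by omega))) t
      have hE1 : (ballElem (some (.inr (.inl (p, b)))) : DoobV m n' 4).2.1 ⟨2*p.1, hq2⟩
          = (k4Coef b).1 := by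
        show (if (2*p.1 : ℕ) = 2*p.1 then _ else _) = _
        rw [if_pos rfl]
      have hE2 : (ballElem (some (.inr (.inl (p, b)))) : DoobV m n' 4).2.1 ⟨2*p.1+1, hq2'⟩
          = (k4Coef b).2 := by
        show (if (2*p.1+1 : ℕ) = 2*p.1 then _ else _) = _
        rw [if_neg (by omega), if_pos rfl]
      rw [hA1, hA2, hE1, hE2]
    show (bA u w).mulVec 0 t + z2toZ4 ((bA' u' w').mulVec _ t) + (bA'' c).mulVec 0 t = _
    rw [Matrix.mulVec_zero, Matrix.mulVec_zero, hsum]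
    show (0 : Fin k → ZMod 4) t + _ + (0 : Fin k → ZMod 4) t
      = z2toZ4 ((k4val (u' p) (w' p) b) t)
    fin_cases b <;>
      simp [k4Coef, k4val, Pi.add_apply, mul_one, mul_zero]
  · funext t
    have hsum : (bA'' c).mulVec (ballElem (some (.inr (.inr (l, b)))) : DoobV m n' 4).2.2 t
        = c l t * cCoef b := by
      show ∑ q, bA'' c t q * _ = _
      rw [dot_one _ _ l ?zeros]
      case zeros =>
        intro q hq
        show (if q = l then _ else _) = 0
        rw [if_neg hq]
      show bA'' c t l * (if l = l then _ else _) = _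
      rw [if_pos rfl]
      rfl
    show (bA u w).mulVec 0 t + z2toZ4 ((bA' u' w').mulVec 0 t) + (bA'' c).mulVec _ t = _
    rw [Matrix.mulVec_zero, Matrix.mulVec_zero, hsum]
    show (0 : Fin k → ZMod 4) t + z2toZ4 0 + _ = cval (c l) b t
    rw [z2toZ4_zero]
    have e3 : (3 : ZMod 4) = -1 := by decide
    have h2 : ∀ x : ZMod 4, x * 2 = x + x := by decide
    fin_cases b <;>
      simp [cCoef, cval, Pi.add_apply, Pi.neg_apply, e3, mul_neg_one, h2]

lemma ball_weight (s : Spec (Fin m) (Fin n')) : IsWeightOne (ballElem (some s)) := by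
  rcases s with ⟨i, a⟩ | (⟨p, b⟩ | ⟨l, b⟩)
  · refine Or.inl ⟨i, ?_, ?_, rfl, rfl⟩
    · have hE1 : (ballElem (some (.inl (i, a))) : DoobV m n' 4).1
          ⟨2*i.1, by have := i.2; omega⟩ = (shrCoef a).1 := by
        show (if (2*i.1 : ℕ) = 2*i.1 then _ else _) = _
        rw [if_pos rfl]
      have hE2 : (ballElem (some (.inl (i, a))) : DoobV m n' 4).1
          ⟨2*i.1+1, by have := i.2; omega⟩ = (shrCoef a).2 := by
        show (if (2*i.1+1 : ℕ) = 2*i.1 then _ else _) = _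
        rw [if_neg (by omega), if_pos rfl]
      rw [hE1, hE2]
      fin_cases a <;> simp [shrCoef, shrGen]
    · intro q hqa hqb
      show (if q.1 = 2*i.1 then _ else if q.1 = 2*i.1+1 then _ else 0) = 0
      rw [if_neg hqa, if_neg hqb]
  · refine Or.inr (Or.inl ⟨p, ?_, ?_, rfl, rfl⟩)
    · have hE1 : (ballElem (some (.inr (.inl (p, b)))) : DoobV m n' 4).2.1
          ⟨2*p.1, by have := p.2; omega⟩ = (k4Coef b).1 := by
        show (if (2*p.1 : ℕ) = 2*p.1 then _ else _) = _
        rw [if_pos rfl]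
      have hE2 : (ballElem (some (.inr (.inl (p, b)))) : DoobV m n' 4).2.1
          ⟨2*p.1+1, by have := p.2; omega⟩ = (k4Coef b).2 := by
        show (if (2*p.1+1 : ℕ) = 2*p.1 then _ else _) = _
        rw [if_neg (by omega), if_pos rfl]
      rw [hE1, hE2]
      fin_cases b <;> simp [k4Coef, k4Gen]
    · intro q hqa hqb
      show (if q.1 = 2*p.1 then _ else if q.1 = 2*p.1+1 then _ else 0) = 0
      rw [if_neg hqa, if_neg hqb]
  · refine Or.inr (Or.inr ⟨l, ?_, ?_, rfl, rfl⟩)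
    · show (if l = l then _ else _) ≠ 0
      rw [if_pos rfl]
      fin_cases b <;> decide
    · intro q hq
      show (if q = l then _ else _) = 0
      rw [if_neg hq]

lemma ball_classify (e : DoobV m n' 4) (he : e = 0 ∨ IsWeightOne e) :
    ∃ s, e = ballElem s := by
  rcases he with rfl | hw
  · exact ⟨none, rfl⟩
  rcases hw with ⟨i, hpair, hz, h1, h2⟩ | ⟨p, hpair, hz, h1, h2⟩ | ⟨l, hnz, hz, h1, h2⟩
  · simp only [shrGen, Set.mem_insert_iff, Set.mem_singleton_iff, Prod.mk.injEq] at hpair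
    have key : ∃ a : Fin 6,
        e.1 ⟨2*i.1, by have := i.2; omega⟩ = (shrCoef a).1 ∧
        e.1 ⟨2*i.1+1, by have := i.2; omega⟩ = (shrCoef a).2 := by
      rcases hpair with ⟨ha, hb⟩ | ⟨ha, hb⟩ | ⟨ha, hb⟩ | ⟨ha, hb⟩ | ⟨ha, hb⟩ | ⟨ha, hb⟩
      · exact ⟨2, ha, hb⟩
      · exact ⟨1, ha, hb⟩
      · exact ⟨5, ha, hb⟩
      · exact ⟨3, ha, hb⟩
      · exact ⟨0, ha, hb⟩
      · exact ⟨4, ha, hb⟩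
    obtain ⟨a, ha1, ha2⟩ := key
    refine ⟨some (.inl (i, a)), ?_⟩
    refine Prod.ext ?_ (Prod.ext h1 h2)
    funext q
    show e.1 q = (if q.1 = 2*i.1 then _ else if q.1 = 2*i.1+1 then _ else 0)
    by_cases hq1 : q.1 = 2*i.1
    · rw [if_pos hq1, show q = ⟨2*i.1, by have := i.2; omega⟩ from Fin.ext hq1]
      exact ha1
    · rw [if_neg hq1]
      by_cases hq2 : q.1 = 2*i.1+1
      · rw [if_pos hq2, show q = ⟨2*i.1+1, by have := i.2; omega⟩ from Fin.ext hq2]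
        exact ha2
      · rw [if_neg hq2]
        exact hz q hq1 hq2
  · simp only [k4Gen, Set.mem_insert_iff, Set.mem_singleton_iff, Prod.mk.injEq] at hpair
    have key : ∃ b : Fin 3,
        e.2.1 ⟨2*p.1, by have := p.2; omega⟩ = (k4Coef b).1 ∧
        e.2.1 ⟨2*p.1+1, by have := p.2; omega⟩ = (k4Coef b).2 := by
      rcases hpair with ⟨ha, hb⟩ | ⟨ha, hb⟩ | ⟨ha, hb⟩
      · exact ⟨1, ha, hb⟩
      · exact ⟨0, ha, hb⟩
      · exact ⟨2, ha, hb⟩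
    obtain ⟨b, hb1, hb2⟩ := key
    refine ⟨some (.inr (.inl (p, b))), ?_⟩
    refine Prod.ext h1 (Prod.ext ?_ h2)
    funext q
    show e.2.1 q = (if q.1 = 2*p.1 then _ else if q.1 = 2*p.1+1 then _ else 0)
    by_cases hq1 : q.1 = 2*p.1
    · rw [if_pos hq1, show q = ⟨2*p.1, by have := p.2; omega⟩ from Fin.ext hq1]
      exact hb1
    · rw [if_neg hq1]
      by_cases hq2 : q.1 = 2*p.1+1
      · rw [if_pos hq2, show q = ⟨2*p.1+1, by have := p.2; omega⟩ from Fin.ext hq2]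
        exact hb2
      · rw [if_neg hq2]
        exact hz q hq1 hq2
  · have key : ∃ b : Fin 3, e.2.2 l = cCoef b := by
      rcases (by decide : ∀ x : ZMod 4, x ≠ 0 → x = 1 ∨ x = 2 ∨ x = 3) _ hnz with h | h | h
      · exact ⟨0, h⟩
      · exact ⟨1, h⟩
      · exact ⟨2, h⟩
    obtain ⟨b, hb⟩ := key
    refine ⟨some (.inr (.inr (l, b))), ?_⟩
    refine Prod.ext h1 (Prod.ext h2 ?_)
    funext q
    show e.2.2 q = (if q = l then _ else _)
    by_cases hq : q = l
    · rw [if_pos hq, hq]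
      exact hb
    · rw [if_neg hq]
      exact hz q hq

/-- Transporting the abstract family to concrete column functions. -/
lemma fval_transport (F : Fam k) (eι : Fin m ≃ F.ι) (eκ : Fin n' ≃ F.κ) :
    Function.Bijective (fval (j0 k) (fun i => F.eM (F.u (eι i))) (fun i => F.eM (F.w (eι i)))
      (fun p => F.eW (F.u' (eκ p))) (fun p => F.eW (F.w' (eκ p))) (fun l => F.eM (F.c l))) := by
  have hjj : ∀ v : F.W, j0 k (F.eW v) = F.eM (F.j v) := fun v =>
    funext fun i => (F.hj v i).symm
  let remap : Option (Spec (Fin m) (Fin n')) ≃ Option (Spec F.ι F.κ) :=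
    Equiv.optionCongr (Equiv.sumCongr (Equiv.prodCongr eι (Equiv.refl (Fin 6)))
      (Equiv.sumCongr (Equiv.prodCongr eκ (Equiv.refl (Fin 3))) (Equiv.refl (Fin 4 × Fin 3))))
  have key : ∀ s, fval (j0 k) (fun i => F.eM (F.u (eι i))) (fun i => F.eM (F.w (eι i)))
      (fun p => F.eW (F.u' (eκ p))) (fun p => F.eW (F.w' (eκ p))) (fun l => F.eM (F.c l)) s
      = F.eM (fval F.j F.u F.w F.u' F.w' F.c (remap s)) := by
    rintro (_ | (⟨i, a⟩ | (⟨p, b⟩ | ⟨l, b⟩)))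
    · show (0 : Fin k → ZMod 4) = F.eM 0
      rw [map_zero]
    · exact (shval_map F.eM.toAddMonoidHom _ _ a).symm
    · show j0 k (k4val (F.eW (F.u' (eκ p))) (F.eW (F.w' (eκ p))) b)
        = F.eM (F.j (k4val (F.u' (eκ p)) (F.w' (eκ p)) b))
      rw [show k4val (F.eW (F.u' (eκ p))) (F.eW (F.w' (eκ p))) b
        = F.eW (k4val (F.u' (eκ p)) (F.w' (eκ p)) b)
        from (k4val_map F.eW.toAddMonoidHom (F.u' (eκ p)) (F.w' (eκ p)) b).symm]
      exact hjj _
    · exact (cval_map F.eM.toAddMonoidHom _ b).symm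
  rw [show (fval (j0 k) (fun i => F.eM (F.u (eι i))) (fun i => F.eM (F.w (eι i)))
      (fun p => F.eW (F.u' (eκ p))) (fun p => F.eW (F.w' (eκ p))) (fun l => F.eM (F.c l)))
      = ⇑F.eM ∘ (fval F.j F.u F.w F.u' F.w' F.c) ∘ ⇑remap from funext key]
  exact (F.eM.bijective.comp F.bij).comp remap.bijective

end Assembly

section Final

lemma perfect_of_bij {k m n' : ℕ} (u w : Fin m → Fin k → ZMod 4)
    (u' w' : Fin n' → Fin k → ZMod 2) (c : Fin 4 → Fin k → ZMod 4)
    (hbij : Function.Bijective (fval (j0 k) u w u' w' c)) :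
    IsPerfectCode ((AddMonoidHom.ker (synHom u w u' w' c) :
      AddSubgroup (DoobV m n' 4)) : Set (DoobV m n' 4)) := by
  intro v
  obtain ⟨s, hs⟩ := hbij.2 (synHom u w u' w' c v)
  refine ⟨v - ballElem s, ⟨?_, ?_⟩, ?_⟩
  · show v - ballElem s ∈ AddMonoidHom.ker (synHom u w u' w' c)
    rw [AddMonoidHom.mem_ker, map_sub, syn_ball, hs, sub_self]
  · rcases s with _ | s'
    · left
      show v = v - 0
      rw [sub_zero]
    · right
      rw [sub_sub_cancel]
      exact ball_weight s'
  · rintro c' ⟨hmem, hcond⟩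
    have hmem' : c' ∈ AddMonoidHom.ker (synHom u w u' w' c) := hmem
    have he' : v - c' = 0 ∨ IsWeightOne (v - c') := by
      rcases hcond with h | h
      · left
        rw [h, sub_self]
      · right
        exact h
    obtain ⟨s', hs'⟩ := ball_classify (v - c') he'
    have hfv : fval (j0 k) u w u' w' c s' = fval (j0 k) u w u' w' c s := by
      rw [← syn_ball u w u' w' c s', ← hs', map_sub, AddMonoidHom.mem_ker.mp hmem',
        sub_zero, hs]
    have hss : s' = s := hbij.1 hfv
    rw [← hss, ← hs']
    exact (sub_sub_cancel v c').symm

end Final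

set_option maxHeartbeats 1000000 in
/-- for every odd `Δ ≥ 3` there is an additive 1-perfect code in
`D(m, n'+4)` with `m = (2^{2Δ} - 2^Δ - 8)/6` and `n' = (2^Δ - 5)/3`
(the exact divisions are rendered as `6*m + 2^Δ + 8 = 2^{2Δ}` and `3*n' + 5 = 2^Δ`). -/
theorem statement6 (Δ m n' : ℕ) (hΔodd : Odd Δ) (hΔ : 3 ≤ Δ)
    (hm : 6*m + 2^Δ + 8 = 2^(2*Δ)) (hn : 3*n' + 5 = 2^Δ) :
    ∃ C : AddSubgroup (DoobV m n' 4), IsPerfectCode (C : Set (DoobV m n' 4)) := by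
  obtain ⟨nn, rfl⟩ : ∃ nn, Δ = 3 + 2*nn := by
    obtain ⟨j, hj⟩ := hΔodd
    exact ⟨j - 1, by omega⟩
  obtain ⟨F⟩ := famExists nn
  have h4 : (2:ℕ)^(2*(3+2*nn)) = 4^(3+2*nn) := by
    rw [pow_mul]
    norm_num
  rw [h4] at hm
  have hcι : Fintype.card F.ι = m := by
    have h := F.hm
    omega
  have hcκ : Fintype.card F.κ = n' := by
    have h := F.hn
    omega
  have eι : Fin m ≃ F.ι := (Fintype.equivFinOfCardEq hcι).symm
  have eκ : Fin n' ≃ F.κ := (Fintype.equivFinOfCardEq hcκ).symm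
  have hbij := fval_transport F eι eκ
  exact ⟨_, perfect_of_bij _ _ _ _ _ hbij⟩
end
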